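/- Consider the one-dimensional ergodic MFG system with g(m) = m and V(x) = π cos(4πx). Let m(x) = (π cos(4πx))⁺ and let ũ, û : ℝ → ℝ be the 1-periodic Lipschitz functions with ũ(0) = û(0) = 0 whose a.e. derivatives are: ũ'(x) = √(2(−π cos(4πx))⁺) for x ∈ (1/8, 3/8), ũ'(x) = −√(2(−π cos(4πx))⁺) for x ∈ (5/8, 7/8), and ũ'(x) = 0 for all other x ∈ (0,1); û'(x) = √(2(−π cos(4πx))⁺) for x ∈ (1/8, 1/4) ∪ (5/8, 3/4), û'(x) = −√(2(−π cos(4πx))⁺) for x ∈ (1/4, 3/8) ∪ (3/4, 7/8), and û'(x) = 0 for all other x ∈ (0,1). Then: m ≥ 0 and ∫₀¹ m dx = 1; both ũ and û satisfy (1/2)(u'(x))² + π cos(4πx) = m(x) for a.e. x ∈ [0,1] and m(x) u'(x) = 0 for a.e. x ∈ [0,1]; and ũ − û is not a.e. equal to a constant. In particular, this ergodic MFG system (with H̄ = 0) admits two Lipschitz solutions that do not differ by a constant. -/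

import Mathlib

/-!
Where `V(x) = π cos(4πx)` is negative, the Hamilton–Jacobi equation forces `m = 0` and
`|u'| = √(-2V)`; where `V ≥ 0` the speed `√(2V⁻)` vanishes, so `u' = 0` and `m = V`.
Hence the primitive of any measurable choice of sign times `√(2V⁻)` solves the system a.e.
(its derivative being given a.e. by Lebesgue's differentiation theorem), and it is 1-periodic
once that choice has mean zero. Both prescribed sign patterns are odd and 1-periodic, hence of
mean zero. On `[0, 3/8]` one has `û' ≤ ũ'`, strictly on `(1/4, 3/8)` where the signs are
opposite, so the continuous function `ũ - û` takes different values at `0` and `3/8`.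
-/

open MeasureTheory Set

/-- The density `m(x) = (π cos(4πx))⁺`. -/
noncomputable def mEx (x : ℝ) : ℝ := max (Real.pi * Real.cos (4 * Real.pi * x)) 0

/-- The speed `√(2(−π cos(4πx))⁺)`. -/
noncomputable def sEx (x : ℝ) : ℝ :=
  Real.sqrt (2 * max (-(Real.pi * Real.cos (4 * Real.pi * x))) 0)

/-- The a.e. derivative of `ũ` (prescribed on `(0,1)` and extended by periodicity). -/
noncomputable def Ftil (x : ℝ) : ℝ :=
  if 1 / 8 < Int.fract x ∧ Int.fract x < 3 / 8 then sEx x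
  else if 5 / 8 < Int.fract x ∧ Int.fract x < 7 / 8 then -sEx x
  else 0

/-- The a.e. derivative of `û` (prescribed on `(0,1)` and extended by periodicity). -/
noncomputable def Fhat (x : ℝ) : ℝ :=
  if (1 / 8 < Int.fract x ∧ Int.fract x < 1 / 4) ∨
      (5 / 8 < Int.fract x ∧ Int.fract x < 3 / 4) then sEx x
  else if (1 / 4 < Int.fract x ∧ Int.fract x < 3 / 8) ∨
      (3 / 4 < Int.fract x ∧ Int.fract x < 7 / 8) then -sEx x
  else 0


open intervalIntegral Function

theorem MeasureTheory.LocallyIntegrable.intervalIntegrable {E : Type*} [NormedAddCommGroup E]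
    {f : ℝ → E} (hf : LocallyIntegrable f) (a b : ℝ) : IntervalIntegrable f volume a b :=
  (hf.integrableOn_isCompact isCompact_uIcc).intervalIntegrable

section Primitive

variable {E : Type*} [NormedAddCommGroup E] [NormedSpace ℝ E]

theorem Function.Odd.intervalIntegral_neg_eq_zero {f : ℝ → E} (hf : Function.Odd f) (a : ℝ) :
    ∫ x in -a..a, f x = 0 := by
  have h := integral_comp_neg (a := -a) (b := a) f
  simp only [hf _, intervalIntegral.integral_neg, neg_neg] at h
  rw [neg_eq_iff_add_eq_zero, ← two_smul ℝ, smul_eq_zero] at h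
  exact h.resolve_left two_ne_zero

theorem Function.Periodic.intervalIntegral_eq_zero_of_odd {f : ℝ → E} {T : ℝ}
    (hp : Periodic f T) (ho : Function.Odd f) (t : ℝ) : ∫ x in t..t + T, f x = 0 := by
  rw [hp.intervalIntegral_add_eq t (-(T / 2)), show -(T / 2) + T = T / 2 by ring]
  exact ho.intervalIntegral_neg_eq_zero _

theorem Function.Periodic.periodic_intervalIntegral {f : ℝ → E} {T : ℝ} (hp : Periodic f T)
    (hf : LocallyIntegrable f) (h0 : ∫ x in 0..T, f x = 0) (a : ℝ) :
    Periodic (fun x => ∫ t in a..x, f t) T := fun x => by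
  dsimp only
  rw [hp.intervalIntegral_add_eq_add a x hf.intervalIntegrable, hp.intervalIntegral_add_eq a 0,
    zero_add, h0, add_zero]

theorem lipschitzWith_intervalIntegral {f : ℝ → E} {C : NNReal} (hf : LocallyIntegrable f)
    (hC : ∀ x, ‖f x‖ ≤ C) (a : ℝ) : LipschitzWith C (fun x => ∫ t in a..x, f t) := by
  refine LipschitzWith.of_dist_le_mul fun x y => ?_
  rw [dist_eq_norm, Real.dist_eq, integral_interval_sub_left (hf.intervalIntegrable a x)
    (hf.intervalIntegrable a y)]
  exact norm_integral_le_of_norm_le_const fun t _ => hC t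

end Primitive

section CosinePotential

open Real

theorem periodic_cos_four_pi_mul : Periodic (fun x => cos (4 * π * x)) (1 / 2) := by
  have h := cos_periodic.const_mul (4 * π)
  rwa [show (4 * π)⁻¹ * (2 * π) = 1 / 2 by field_simp; ring] at h

theorem cos_four_pi_mul_fract (x : ℝ) : cos (4 * π * Int.fract x) = cos (4 * π * x) := by
  have h := (periodic_cos_four_pi_mul.nat_mul 2).sub_int_mul_eq (x := x) ⌊x⌋
  rwa [show (2 : ℕ) * (1 / 2 : ℝ) = 1 by norm_num, mul_one, Int.self_sub_floor] at h

theorem cos_four_pi_mul_nonneg {t : ℝ} (k : ℤ) (h₁ : k / 2 - 1 / 8 ≤ t)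
    (h₂ : t ≤ k / 2 + 1 / 8) : 0 ≤ cos (4 * π * t) := by
  rw [← periodic_cos_four_pi_mul.sub_int_mul_eq k]
  exact cos_nonneg_of_mem_Icc ⟨by nlinarith [pi_pos], by nlinarith [pi_pos]⟩

theorem cos_four_pi_mul_neg {t : ℝ} (k : ℤ) (h₁ : k / 2 + 1 / 8 < t)
    (h₂ : t < k / 2 + 3 / 8) : cos (4 * π * t) < 0 := by
  rw [← periodic_cos_four_pi_mul.sub_int_mul_eq k]
  exact cos_neg_of_pi_div_two_lt_of_lt (by nlinarith [pi_pos]) (by nlinarith [pi_pos])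

theorem sEx_periodic : Periodic sEx (1 / 2) := fun x => by
  simp only [sEx, periodic_cos_four_pi_mul x]

theorem sEx_periodic_one : Periodic sEx 1 := by
  simpa using sEx_periodic.nat_mul 2

theorem sEx_even : Function.Even sEx := fun x => by
  simp only [sEx, mul_neg, cos_neg]

theorem sEx_continuous : Continuous sEx := by
  unfold sEx; fun_prop

theorem sEx_nonneg (x : ℝ) : 0 ≤ sEx x := sqrt_nonneg _

theorem sEx_le (x : ℝ) : sEx x ≤ NNReal.sqrt (2 * NNReal.pi) := by
  push_cast [NNReal.coe_real_pi]
  refine sqrt_le_sqrt (mul_le_mul_of_nonneg_left (max_le ?_ pi_pos.le) two_pos.le)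
  nlinarith [neg_one_le_cos (4 * π * x), pi_pos]

theorem sEx_eq_zero_of_cos_nonneg {x : ℝ} (h : 0 ≤ cos (4 * π * x)) : sEx x = 0 := by
  rw [sEx, max_eq_right (by nlinarith [pi_pos]), mul_zero, sqrt_zero]

theorem sEx_pos_of_cos_neg {x : ℝ} (h : cos (4 * π * x) < 0) : 0 < sEx x :=
  sqrt_pos.mpr (mul_pos two_pos (lt_max_of_lt_left (by nlinarith [pi_pos])))

theorem sEx_eq_zero_of_fract {x : ℝ} (h₁ : ¬(1 / 8 < Int.fract x ∧ Int.fract x < 3 / 8))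
    (h₂ : ¬(5 / 8 < Int.fract x ∧ Int.fract x < 7 / 8)) : sEx x = 0 := by
  apply sEx_eq_zero_of_cos_nonneg
  rw [← cos_four_pi_mul_fract]
  have := Int.fract_nonneg x
  have := Int.fract_lt_one x
  by_cases h : Int.fract x ≤ 1 / 8
  · exact cos_four_pi_mul_nonneg 0 (by push_cast; linarith) (by push_cast; linarith)
  by_cases h' : Int.fract x ≤ 5 / 8
  · exact cos_four_pi_mul_nonneg 1 (by push_cast; grind) (by push_cast; linarith)
  · exact cos_four_pi_mul_nonneg 2 (by push_cast; grind) (by push_cast; linarith)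

theorem mfg_of_sq_eq_sq_sEx {x v : ℝ} (hv : v ^ 2 = sEx x ^ 2) :
    1 / 2 * v ^ 2 + π * cos (4 * π * x) = mEx x ∧ mEx x * v = 0 := by
  rcases le_or_gt 0 (cos (4 * π * x)) with hc | hc
  · have hv0 : v = 0 := by simpa [sEx_eq_zero_of_cos_nonneg hc] using hv
    simp [hv0, mEx, max_eq_left (mul_nonneg pi_pos.le hc)]
  · have hm : mEx x = 0 := max_eq_right (by nlinarith [pi_pos])
    rw [hm, hv, sEx, sq_sqrt (by positivity), max_eq_left (by nlinarith [pi_pos])]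
    constructor <;> ring

theorem Ftil_sq (x : ℝ) : Ftil x ^ 2 = sEx x ^ 2 := by
  unfold Ftil
  split_ifs with h₁ h₂
  · rfl
  · exact neg_sq _
  · rw [sEx_eq_zero_of_fract h₁ h₂, zero_pow two_ne_zero]

theorem Fhat_sq {x : ℝ} (h₁ : Int.fract x ≠ 1 / 4) (h₂ : Int.fract x ≠ 3 / 4) :
    Fhat x ^ 2 = sEx x ^ 2 := by
  unfold Fhat
  split_ifs with h h'
  · rfl
  · exact neg_sq _
  · rw [sEx_eq_zero_of_fract (by grind) (by grind), zero_pow two_ne_zero]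

theorem abs_Ftil_le (x : ℝ) : |Ftil x| ≤ sEx x := by
  unfold Ftil; split_ifs <;> simp [abs_of_nonneg (sEx_nonneg x), sEx_nonneg]

theorem abs_Fhat_le (x : ℝ) : |Fhat x| ≤ sEx x := by
  unfold Fhat; split_ifs <;> simp [abs_of_nonneg (sEx_nonneg x), sEx_nonneg]

theorem Ftil_periodic : Periodic Ftil 1 := fun x => by
  simp only [Ftil, Int.fract_add_one, sEx_periodic_one x]

theorem Fhat_periodic : Periodic Fhat 1 := fun x => by
  simp only [Fhat, Int.fract_add_one, sEx_periodic_one x]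

theorem Ftil_odd : Function.Odd Ftil := fun x => by
  have := Int.fract_nonneg x
  have := Int.fract_lt_one x
  rcases eq_or_ne (Int.fract x) 0 with h | h
  · simp only [Ftil, h, Int.fract_neg_eq_zero.mpr h]; norm_num
  · simp only [Ftil, Int.fract_neg h, sEx_even x]; split_ifs <;> grind

theorem Fhat_odd : Function.Odd Fhat := fun x => by
  have := Int.fract_nonneg x
  have := Int.fract_lt_one x
  rcases eq_or_ne (Int.fract x) 0 with h | h
  · simp only [Fhat, h, Int.fract_neg_eq_zero.mpr h]; norm_num
  · simp only [Fhat, Int.fract_neg h, sEx_even x]; split_ifs <;> grind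

theorem Ftil_measurable : Measurable Ftil := by
  refine .ite ?_ sEx_continuous.measurable (.ite ?_ sEx_continuous.measurable.neg measurable_const)
    <;> exact measurable_fract measurableSet_Ioo

theorem Fhat_measurable : Measurable Fhat := by
  refine .ite ?_ sEx_continuous.measurable (.ite ?_ sEx_continuous.measurable.neg measurable_const)
    <;> exact (measurable_fract measurableSet_Ioo).union (measurable_fract measurableSet_Ioo)

theorem locallyIntegrable_of_abs_le_sEx {F : ℝ → ℝ} (hF : Measurable F)
    (h : ∀ x, |F x| ≤ sEx x) : LocallyIntegrable F :=
  sEx_continuous.locallyIntegrable.mono hF.aestronglyMeasurable <| ae_of_all _ fun x => by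
    simpa [abs_of_nonneg (sEx_nonneg x)] using h x

theorem Ftil_locallyIntegrable : LocallyIntegrable Ftil :=
  locallyIntegrable_of_abs_le_sEx Ftil_measurable abs_Ftil_le

theorem Fhat_locallyIntegrable : LocallyIntegrable Fhat :=
  locallyIntegrable_of_abs_le_sEx Fhat_measurable abs_Fhat_le

theorem Fhat_le_Ftil {x : ℝ} (h₀ : 0 ≤ x) (h₁ : x ≤ 3 / 8) : Fhat x ≤ Ftil x := by
  have := sEx_nonneg x
  have hx : Int.fract x = x := Int.fract_eq_self.mpr ⟨h₀, by linarith⟩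
  simp only [Fhat, Ftil, hx]
  split_ifs <;> grind

theorem Fhat_lt_Ftil {x : ℝ} (h₀ : 1 / 4 < x) (h₁ : x < 3 / 8) : Fhat x < Ftil x := by
  have := sEx_pos_of_cos_neg <|
    cos_four_pi_mul_neg (t := x) 0 (by push_cast; linarith) (by push_cast; linarith)
  have hx : Int.fract x = x := Int.fract_eq_self.mpr ⟨by linarith, by linarith⟩
  simp only [Fhat, Ftil, hx]
  split_ifs <;> grind

theorem integral_Fhat_lt_integral_Ftil :
    ∫ x in (0 : ℝ)..3 / 8, Fhat x < ∫ x in (0 : ℝ)..3 / 8, Ftil x := by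
  have hi : ∀ a b, IntervalIntegrable (fun x => Ftil x - Fhat x) volume a b := fun a b =>
    (Ftil_locallyIntegrable.sub Fhat_locallyIntegrable).intervalIntegrable a b
  rw [← sub_pos, ← integral_sub (Ftil_locallyIntegrable.intervalIntegrable _ _)
      (Fhat_locallyIntegrable.intervalIntegrable _ _),
    ← integral_add_adjacent_intervals (hi 0 (1 / 4)) (hi (1 / 4) (3 / 8))]
  refine add_pos_of_nonneg_of_pos ?_ (intervalIntegral_pos_of_pos_on (hi _ _) ?_ (by norm_num))
  · exact integral_nonneg (by norm_num) fun x hx =>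
      sub_nonneg.mpr (Fhat_le_Ftil hx.1 (by linarith [hx.2]))
  · exact fun x hx => sub_pos.mpr (Fhat_lt_Ftil hx.1 hx.2)

theorem mEx_periodic : Periodic mEx (1 / 2) := fun x => by
  simp only [mEx, periodic_cos_four_pi_mul x]

theorem mEx_continuous : Continuous mEx := by
  unfold mEx; fun_prop

theorem integral_mEx : ∫ x in Icc (0 : ℝ) 1, mEx x = 1 := by
  have hi : ∀ a b, IntervalIntegrable mEx volume a b := mEx_continuous.intervalIntegrable
  have hpos : EqOn mEx (fun x => π * cos (4 * π * x)) (uIcc (-1 / 8) (1 / 8)) := by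
    intro x hx
    rw [uIcc_of_le (by norm_num)] at hx
    exact max_eq_left (mul_nonneg pi_pos.le
      (cos_four_pi_mul_nonneg 0 (by push_cast; linarith [hx.1]) (by push_cast; linarith [hx.2])))
  have hneg : EqOn mEx (fun _ => 0) (uIcc (1 / 8) (3 / 8)) := by
    intro x hx
    rw [uIcc_of_le (by norm_num)] at hx
    exact max_eq_right (mul_nonpos_of_nonneg_of_nonpos pi_pos.le
      (cos_nonpos_of_pi_div_two_le_of_le (by nlinarith [hx.1, pi_pos])
        (by nlinarith [hx.2, pi_pos])))
  have hperiod : ∫ x in (0 : ℝ)..1, mEx x = 2 * ∫ x in (-1 / 8 : ℝ)..3 / 8, mEx x := by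
    have := mEx_periodic.intervalIntegral_add_zsmul_eq 2 0 hi
    rw [mEx_periodic.intervalIntegral_add_eq 0 (-1 / 8)] at this
    norm_num at this ⊢
    exact this
  rw [integral_Icc_eq_integral_Ioc, ← integral_of_le zero_le_one, hperiod,
    ← integral_add_adjacent_intervals (hi _ (1 / 8)) (hi _ _), integral_congr hpos,
    integral_congr hneg]
  simp only [intervalIntegral.integral_const_mul,
    integral_comp_mul_left (fun x => cos x) (by positivity : 4 * π ≠ 0), integral_cos,
    intervalIntegral.integral_zero, add_zero, smul_eq_mul]
  rw [show 4 * π * (1 / 8) = π / 2 by ring, show 4 * π * (-1 / 8) = -(π / 2) by ring, sin_neg,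
    sin_pi_div_two]
  field_simp
  norm_num

theorem ae_fract_ne (c : ℝ) : ∀ᵐ x : ℝ, Int.fract x ≠ c := by
  refine ae_iff.mpr (Set.Countable.measure_zero ((countable_range fun n : ℤ => c + n).mono ?_) _)
  rintro x hx
  exact ⟨⌊x⌋, by simp only [not_not, mem_ofPred_eq] at hx; rw [← hx, Int.fract]; ring⟩

end CosinePotential

theorem stmt18 :
    ∃ utld uhat : ℝ → ℝ,
      (∃ K : NNReal, LipschitzWith K utld) ∧ Function.Periodic utld 1 ∧ utld 0 = 0 ∧
      (∀ᵐ x ∂(volume : Measure ℝ), HasDerivAt utld (Ftil x) x) ∧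
      (∃ K : NNReal, LipschitzWith K uhat) ∧ Function.Periodic uhat 1 ∧ uhat 0 = 0 ∧
      (∀ᵐ x ∂(volume : Measure ℝ), HasDerivAt uhat (Fhat x) x) ∧
      (∀ x, 0 ≤ mEx x) ∧ (∫ x in Icc (0 : ℝ) 1, mEx x) = 1 ∧
      (∀ᵐ x ∂(volume : Measure ℝ), x ∈ Icc (0 : ℝ) 1 →
        (1 / 2) * deriv utld x ^ 2 + Real.pi * Real.cos (4 * Real.pi * x) = mEx x ∧
        mEx x * deriv utld x = 0) ∧
      (∀ᵐ x ∂(volume : Measure ℝ), x ∈ Icc (0 : ℝ) 1 →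
        (1 / 2) * deriv uhat x ^ 2 + Real.pi * Real.cos (4 * Real.pi * x) = mEx x ∧
        mEx x * deriv uhat x = 0) ∧
      ¬ (∃ c : ℝ, ∀ᵐ x ∂(volume : Measure ℝ), utld x - uhat x = c) := by
  have hlip_til := lipschitzWith_intervalIntegral Ftil_locallyIntegrable
    (fun x => (abs_Ftil_le x).trans (sEx_le x)) 0
  have hlip_hat := lipschitzWith_intervalIntegral Fhat_locallyIntegrable
    (fun x => (abs_Fhat_le x).trans (sEx_le x)) 0
  have hderiv_til := (LocallyIntegrable.ae_hasDerivAt_integral Ftil_locallyIntegrable).mono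
    fun x hx => hx 0
  have hderiv_hat := (LocallyIntegrable.ae_hasDerivAt_integral Fhat_locallyIntegrable).mono
    fun x hx => hx 0
  refine ⟨_, _, ⟨_, hlip_til⟩,
    Ftil_periodic.periodic_intervalIntegral Ftil_locallyIntegrable (by
      simpa using Ftil_periodic.intervalIntegral_eq_zero_of_odd Ftil_odd 0) 0,
    integral_same, hderiv_til, ⟨_, hlip_hat⟩,
    Fhat_periodic.periodic_intervalIntegral Fhat_locallyIntegrable (by
      simpa using Fhat_periodic.intervalIntegral_eq_zero_of_odd Fhat_odd 0) 0,
    integral_same, hderiv_hat, fun x => le_max_right _ _, integral_mEx, ?_, ?_, ?_⟩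
  · filter_upwards [hderiv_til] with x hx _
    rw [hx.deriv]
    exact mfg_of_sq_eq_sq_sEx (Ftil_sq x)
  · filter_upwards [hderiv_hat, ae_fract_ne (1 / 4), ae_fract_ne (3 / 4)] with x hx h₁ h₂ _
    rw [hx.deriv]
    exact mfg_of_sq_eq_sq_sEx (Fhat_sq h₁ h₂)
  · rintro ⟨c, hc⟩
    have h := ((hlip_til.continuous.sub hlip_hat.continuous).ae_eq_iff_eq volume
      continuous_const).mp hc
    have h₀ : c = 0 := by simpa using (congrFun h 0).symm
    have h₁ : (∫ x in (0 : ℝ)..3 / 8, Ftil x) - ∫ x in (0 : ℝ)..3 / 8, Fhat x = c :=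
      congrFun h (3 / 8)
    linarith [integral_Fhat_lt_integral_Ftil]
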